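/- Under the field setup (x_{i,j} càdlàg, x_{i,j}(0)=0, x_{i,j} non-decreasing for i≠j, x_{i,i} with no negative jumps), fix ρ⃗ ∈ ℝ₊^m \ {0} and let T(y) ∈ ℝ₊^m be the component-wise minimal solution of xᵢ(t⃗−) = −ρᵢ y for all i. Then for each i ∈ [m] and every t < Tᵢ(y), the running infimum satisfies inf_{r ≤ t} x_{i,i}(r) > inf_{r ≤ Tᵢ(y)} x_{i,i}(r). -/

import Mathlib

/-!
Suppose the running infimum of `x_{i,i}` does not decrease between `t` and `Tᵢ`. Since `x_{i,i}`
has no negative jumps, its running infimum is reached as a left limit, so the level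
`x_{i,i}(Tᵢ−) ≤ 0` is already a left limit `x_{i,i}(τ−)` at some `τ ≤ t`. Replacing `Tᵢ` by `τ`
gives a subsolution `x(s⃗−) ≤ −ρ y`, because the off-diagonal `x_{i,j}` are non-decreasing.
Below every subsolution lies a solution: the componentwise infimum of the subsolutions beneath it
is again one (each `x_{k,k}(·−)` is lower semicontinuous from the right), and it is exact, since
otherwise a first passage of a diagonal term would lower it further. That solution has `i`-th
coordinate at most `τ < Tᵢ`, contradicting the minimality of `T`.
-/

open Set Function Filter

/-- Left limit of a càdlàg function, with convention `f(0−) = f(0)`. -/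
noncomputable def llE (f : ℝ → ℝ) (u : ℝ) : ℝ :=
  if u ≤ 0 then f 0 else Function.leftLim f u

/-- Càdlàg on `[0,∞)`: right-continuous, with left limits. -/
def Cadlag (f : ℝ → ℝ) : Prop :=
  (∀ t : ℝ, 0 ≤ t → ContinuousWithinAt f (Set.Ici t) t) ∧
  (∀ t : ℝ, 0 < t →
    Filter.Tendsto f (nhdsWithin t (Set.Iio t)) (nhds (Function.leftLim f t)))

/-- The field setup: `x i j` càdlàg with `x i j 0 = 0`, `x i j` non-decreasing on
`[0,∞)` for `i ≠ j`, and `x i i` without negative jumps. -/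
def FieldSetup (m : ℕ) (x : Fin m → Fin m → ℝ → ℝ) : Prop :=
  ∀ i j : Fin m,
    Cadlag (x i j) ∧ x i j 0 = 0 ∧
    (i ≠ j → MonotoneOn (x i j) (Set.Ici 0)) ∧
    (i = j → ∀ t : ℝ, 0 < t → Function.leftLim (x i j) t ≤ x i j t)

/-- `t` is a (finite, nonnegative) solution of `x(t−) = −ρ y`, i.e.
`Σⱼ x_{i,j}(tⱼ−) = −ρᵢ y` for every `i`. -/
def IsSol (m : ℕ) (x : Fin m → Fin m → ℝ → ℝ) (ρ : Fin m → ℝ) (y : ℝ)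
    (t : Fin m → ℝ) : Prop :=
  (∀ i, 0 ≤ t i) ∧ ∀ i, (∑ j, llE (x i j) (t j)) = -(ρ i * y)

/-- `T` is the component-wise minimal solution of `x(t−) = −ρ y`. -/
def IsMinSol (m : ℕ) (x : Fin m → Fin m → ℝ → ℝ) (ρ : Fin m → ℝ) (y : ℝ)
    (T : Fin m → ℝ) : Prop :=
  IsSol m x ρ y T ∧ ∀ t : Fin m → ℝ, IsSol m x ρ y t → ∀ i, T i ≤ t i

open Topology

theorem llE_of_nonpos {f : ℝ → ℝ} {u : ℝ} (hu : u ≤ 0) : llE f u = f 0 := if_pos hu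

theorem llE_of_pos {f : ℝ → ℝ} {u : ℝ} (hu : 0 < u) : llE f u = leftLim f u := if_neg hu.not_ge

theorem llE_le_self {f : ℝ → ℝ} (hjump : ∀ u, 0 < u → leftLim f u ≤ f u) {u : ℝ} (hu : 0 ≤ u) :
    llE f u ≤ f u := by
  rcases hu.eq_or_lt with rfl | hpos
  · exact (llE_of_nonpos le_rfl).le
  · exact (llE_of_pos hpos).trans_le (hjump u hpos)

theorem LowerSemicontinuousWithinAt.apply_csInf_le {α β : Type*}
    [ConditionallyCompleteLinearOrder α] [TopologicalSpace α] [OrderTopology α] [LinearOrder β]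
    {g : α → β} {S : Set α} {C : β} (hg : LowerSemicontinuousWithinAt g (Ici (sInf S)) (sInf S))
    (hne : S.Nonempty) (hbdd : BddBelow S) (h : ∀ u ∈ S, g u ≤ C) : g (sInf S) ≤ C := by
  by_contra! hC
  have : (𝓝[S] sInf S).NeBot := mem_closure_iff_nhdsWithin_neBot.1 (csInf_mem_closure hne hbdd)
  have hgt : ∀ᶠ u in 𝓝[S] sInf S, C < g u :=
    nhdsWithin_mono _ (fun u hu => csInf_le hbdd hu) (hg C hC)
  obtain ⟨u, hgu, hu⟩ := (hgt.and self_mem_nhdsWithin).exists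
  exact (h u hu).not_gt hgu

namespace Cadlag

variable {f : ℝ → ℝ}

theorem bddBelow_image_Icc (hf : Cadlag f) (B : ℝ) : BddBelow (f '' Icc 0 B) := by
  refine isCompact_Icc.induction_on (p := fun s => BddBelow (f '' s)) (by simp)
    (fun s t hst ht => ht.mono (image_mono hst))
    (fun s t hs ht => by simpa only [image_union] using hs.union ht) fun u hu => ?_
  suffices ∃ c, ∀ᶠ w in 𝓝[Icc 0 B] u, c ≤ f w by
    obtain ⟨c, hc⟩ := this
    exact ⟨_, hc, c, forall_mem_image.2 fun w hw => hw⟩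
  have hright : ∀ᶠ w in 𝓝[≥] u, f u - 1 ≤ f w :=
    (hf.1 u hu.1).eventually (Ici_mem_nhds (by linarith))
  rcases hu.1.eq_or_lt with rfl | hpos
  · exact ⟨_, nhdsWithin_mono _ (fun w hw => hw.1) hright⟩
  · have hleft : ∀ᶠ w in 𝓝[<] u, leftLim f u - 1 ≤ f w :=
      (hf.2 u hpos).eventually (Ici_mem_nhds (by linarith))
    refine ⟨min (leftLim f u - 1) (f u - 1), nhdsWithin_le_nhds ?_⟩
    rw [← nhdsLT_sup_nhdsGE]
    exact mem_sup.2 ⟨hleft.mono fun w hw => min_le_of_left_le hw,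
      hright.mono fun w hw => min_le_of_right_le hw⟩

theorem exists_Ico_forall_lt (hf : Cadlag f) {u c : ℝ} (hu : 0 ≤ u) (hc : c < f u) :
    ∃ u' ∈ Ioi u, ∀ w ∈ Ico u u', c < f w :=
  mem_nhdsGE_iff_exists_Ico_subset.1 ((hf.1 u hu).eventually (Ioi_mem_nhds hc))

theorem exists_Ioo_forall_lt (hf : Cadlag f) {u c : ℝ} (hu : 0 < u) (hc : c < leftLim f u) :
    ∃ a ∈ Iio u, ∀ w ∈ Ioo a u, c < f w :=
  mem_nhdsLT_iff_exists_Ioo_subset.1 ((hf.2 u hu).eventually (Ioi_mem_nhds hc))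

theorem le_leftLim (hf : Cadlag f) {u a c : ℝ} (hu : 0 < u) (ha : a < u)
    (h : ∀ w ∈ Ioo a u, c ≤ f w) : c ≤ leftLim f u :=
  ge_of_tendsto (hf.2 u hu) (eventually_of_mem (Ioo_mem_nhdsLT ha) h)

theorem leftLim_le (hf : Cadlag f) {u a c : ℝ} (hu : 0 < u) (ha : a < u)
    (h : ∀ w ∈ Ioo a u, f w ≤ c) : leftLim f u ≤ c :=
  le_of_tendsto (hf.2 u hu) (eventually_of_mem (Ioo_mem_nhdsLT ha) h)

theorem sInf_image_Icc_le (hf : Cadlag f) {u w : ℝ} (hw : w ∈ Icc 0 u) :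
    sInf (f '' Icc 0 u) ≤ f w :=
  csInf_le (hf.bddBelow_image_Icc u) (mem_image_of_mem f hw)

theorem min_le_sInf_image_Icc (hf : Cadlag f) {v u c : ℝ} (hv : 0 ≤ v) (hvu : v ≤ u)
    (h : ∀ w ∈ Ioc v u, c ≤ f w) : min (sInf (f '' Icc 0 v)) c ≤ sInf (f '' Icc 0 u) := by
  refine le_csInf ((nonempty_Icc.2 (hv.trans hvu)).image f) (forall_mem_image.2 fun w hw => ?_)
  rcases le_or_gt w v with hwv | hvw
  · exact min_le_of_left_le (hf.sInf_image_Icc_le ⟨hw.1, hwv⟩)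
  · exact min_le_of_right_le (h w ⟨hvw, hw.2⟩)

theorem sInf_image_Icc_le_llE (hf : Cadlag f) {u : ℝ} (hu : 0 ≤ u) :
    sInf (f '' Icc 0 u) ≤ llE f u := by
  rcases hu.eq_or_lt with rfl | hpos
  · rw [llE_of_nonpos le_rfl]
    exact hf.sInf_image_Icc_le ⟨le_rfl, le_rfl⟩
  · rw [llE_of_pos hpos]
    exact hf.le_leftLim hpos hpos fun w hw => hf.sInf_image_Icc_le ⟨hw.1.le, hw.2.le⟩

theorem monotone_llE (hf : Cadlag f) (hmono : MonotoneOn f (Ici 0)) : Monotone (llE f) := by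
  have hjump : ∀ u, 0 < u → leftLim f u ≤ f u := fun u hu =>
    hf.leftLim_le hu hu fun w hw => hmono hw.1.le hu.le hw.2.le
  have hle_llE : ∀ a b, 0 ≤ a → a < b → f a ≤ llE f b := fun a b ha hab => by
    rw [llE_of_pos (ha.trans_lt hab)]
    exact hf.le_leftLim (ha.trans_lt hab) hab fun w hw => hmono ha (ha.trans hw.1.le) hw.1.le
  intro a b hab
  rcases hab.eq_or_lt with rfl | hab
  · rfl
  rcases le_or_gt a 0 with ha | ha
  · rw [llE_of_nonpos ha]
    rcases le_or_gt b 0 with hb | hb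
    · rw [llE_of_nonpos hb]
    · exact hle_llE 0 b le_rfl hb
  · exact (llE_le_self hjump ha.le).trans (hle_llE a b ha.le hab)

theorem lowerSemicontinuousWithinAt_llE (hf : Cadlag f)
    (hjump : ∀ u, 0 < u → leftLim f u ≤ f u) {u : ℝ} (hu : 0 ≤ u) :
    LowerSemicontinuousWithinAt (llE f) (Ici u) u := by
  intro z hz
  obtain ⟨z', hzz', hz'⟩ := exists_between hz
  obtain ⟨u', huu', hlt⟩ := hf.exists_Ico_forall_lt hu (hz'.trans_le (llE_le_self hjump hu))
  filter_upwards [Ico_mem_nhdsGE huu'] with v hv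
  rcases hv.1.eq_or_lt with rfl | huv
  · exact hz
  · rw [llE_of_pos (hu.trans_lt huv)]
    exact hzz'.trans_le <| hf.le_leftLim (hu.trans_lt huv) huv fun w hw =>
      (hlt w ⟨hw.1.le, hw.2.trans hv.2⟩).le

theorem exists_llE_eq (hf : Cadlag f) (hf0 : f 0 = 0) (hjump : ∀ u, 0 < u → leftLim f u ≤ f u)
    {t b : ℝ} (ht : 0 ≤ t) (hb : b ≤ 0) (hinf : sInf (f '' Icc 0 t) ≤ b) :
    ∃ τ ∈ Icc 0 t, llE f τ = b := by
  set U := {u ∈ Icc 0 t | sInf (f '' Icc 0 u) ≤ b}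
  have htU : t ∈ U := ⟨⟨ht, le_rfl⟩, hinf⟩
  have hU : U.Nonempty := ⟨t, htU⟩
  have hUbdd : BddBelow U := ⟨0, fun u hu => hu.1.1⟩
  obtain ⟨τ, hτU⟩ : ∃ τ, τ = sInf U := ⟨_, rfl⟩
  have hτ0 : 0 ≤ τ := hτU ▸ le_csInf hU fun u hu => hu.1.1
  have hτt : τ ≤ t := hτU ▸ csInf_le hUbdd htU
  have hbefore : ∀ u ∈ Ico 0 τ, b < sInf (f '' Icc 0 u) := fun u hu => by
    by_contra! h
    exact (hτU ▸ csInf_le hUbdd ⟨⟨hu.1, hu.2.le.trans hτt⟩, h⟩).not_gt hu.2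
  have hat : sInf (f '' Icc 0 τ) ≤ b := by
    by_contra! h
    have hfτ := hf.sInf_image_Icc_le ⟨hτ0, le_rfl⟩
    obtain ⟨u', hτu', hlt⟩ := hf.exists_Ico_forall_lt hτ0
      (show f τ - (sInf (f '' Icc 0 τ) - b) / 2 < f τ by linarith)
    obtain ⟨u, huU, hu⟩ := exists_lt_of_csInf_lt hU (hτU ▸ hτu')
    have := hf.min_le_sInf_image_Icc hτ0 (hτU ▸ csInf_le hUbdd huU)
      fun w hw => (hlt w ⟨hw.1.le, hw.2.trans_lt hu⟩).le
    rcases min_le_iff.1 (this.trans huU.2) with h' | h' <;> linarith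
  refine ⟨τ, ⟨hτ0, hτt⟩, ?_⟩
  rcases hτ0.eq_or_lt with rfl | hτ
  · simp only [Icc_self, image_singleton, csInf_singleton, hf0] at hat
    rw [llE_of_nonpos le_rfl, hf0]
    exact le_antisymm hat hb
  rw [llE_of_pos hτ]
  refine le_antisymm ?_ <| hf.le_leftLim hτ hτ fun w hw =>
    ((hbefore w ⟨hw.1.le, hw.2⟩).trans_le (hf.sInf_image_Icc_le ⟨hw.1.le, le_rfl⟩)).le
  by_contra! hlt
  obtain ⟨c, hbc, hcL⟩ := exists_between hlt
  obtain ⟨a, haτ, hgt⟩ := hf.exists_Ioo_forall_lt hτ hcL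
  have hv : max a 0 ∈ Ico 0 τ := ⟨le_max_right a 0, max_lt haτ hτ⟩
  have := hf.min_le_sInf_image_Icc hv.1 hv.2.le (c := c) fun w hw => by
    rcases hw.2.lt_or_eq with hwτ | rfl
    · exact (hgt w ⟨(le_max_left a 0).trans_lt hw.1, hwτ⟩).le
    · exact hcL.le.trans (hjump w hτ)
  rcases min_le_iff.1 (this.trans hat) with h | h
  · linarith [hbefore _ hv]
  · linarith

end Cadlag

def IsSubSol (m : ℕ) (x : Fin m → Fin m → ℝ → ℝ) (ρ : Fin m → ℝ) (y : ℝ)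
    (s : Fin m → ℝ) : Prop :=
  (∀ i, 0 ≤ s i) ∧ ∀ i, (∑ j, llE (x i j) (s j)) ≤ -(ρ i * y)

theorem sum_llE_update {m : ℕ} (x : Fin m → Fin m → ℝ → ℝ) (s : Fin m → ℝ) (k : Fin m) (u : ℝ) :
    ∑ j, llE (x k j) (update s k u j) =
      llE (x k k) u + ∑ j ∈ Finset.univ.erase k, llE (x k j) (s j) := by
  rw [← Finset.add_sum_erase _ _ (Finset.mem_univ k), update_self]
  congr 1
  exact Finset.sum_congr rfl fun j hj => by rw [update_of_ne (Finset.ne_of_mem_erase hj)]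

section System

variable {m : ℕ} {x : Fin m → Fin m → ℝ → ℝ} {ρ : Fin m → ℝ} {y : ℝ}

theorem IsSol.isSubSol {s : Fin m → ℝ} (hs : IsSol m x ρ y s) : IsSubSol m x ρ y s :=
  ⟨hs.1, fun i => (hs.2 i).le⟩

namespace FieldSetup

theorem monotone_llE (hx : FieldSetup m x) {k j : Fin m} (hkj : k ≠ j) :
    Monotone (llE (x k j)) :=
  (hx k j).1.monotone_llE ((hx k j).2.2.1 hkj)

theorem llE_nonneg (hx : FieldSetup m x) {k j : Fin m} (hkj : k ≠ j) (u : ℝ) : 0 ≤ llE (x k j) u :=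
  calc 0 = llE (x k j) (min u 0) := by rw [llE_of_nonpos (min_le_right u 0), (hx k j).2.1]
    _ ≤ llE (x k j) u := hx.monotone_llE hkj (min_le_left u 0)

theorem sum_erase_llE_nonneg (hx : FieldSetup m x) (k : Fin m) (s : Fin m → ℝ) :
    0 ≤ ∑ j ∈ Finset.univ.erase k, llE (x k j) (s j) :=
  Finset.sum_nonneg fun _ hj => hx.llE_nonneg (Finset.ne_of_mem_erase hj).symm _

theorem sum_llE_le_of_le (hx : FieldSetup m x) {k : Fin m} {r s : Fin m → ℝ} (hrs : r ≤ s)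
    (hk : r k = s k) :
    ∑ j, llE (x k j) (r j) ≤ ∑ j, llE (x k j) (s j) :=
  Finset.sum_le_sum fun j _ => by
    rcases eq_or_ne k j with rfl | hkj
    · rw [hk]
    · exact hx.monotone_llE hkj (hrs j)

theorem isSubSol_update (hx : FieldSetup m x) {s : Fin m → ℝ} {k : Fin m} {τ : ℝ}
    (hs : IsSubSol m x ρ y s) (hτ0 : 0 ≤ τ) (hτ : τ ≤ s k)
    (hrow : llE (x k k) τ + ∑ j ∈ Finset.univ.erase k, llE (x k j) (s j) ≤ -(ρ k * y)) :
    IsSubSol m x ρ y (update s k τ) := by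
  refine ⟨fun j => ?_, fun l => ?_⟩
  · rcases eq_or_ne j k with rfl | hjk
    · simpa using hτ0
    · simpa [hjk] using hs.1 j
  · rcases eq_or_ne l k with rfl | hlk
    · rwa [sum_llE_update]
    · exact (hx.sum_llE_le_of_le (update_le_self_iff.2 hτ) (update_of_ne hlk _ _)).trans (hs.2 l)

theorem isSubSol_sInf (hx : FieldSetup m x) {S : Set (Fin m → ℝ)} (hne : S.Nonempty)
    (hS : ∀ r ∈ S, IsSubSol m x ρ y r) :
    IsSubSol m x ρ y (fun j => sInf ((fun r => r j) '' S)) := by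
  set c := fun j => sInf ((fun r => r j) '' S)
  have hbdd : ∀ j, BddBelow ((fun r => r j) '' S) := fun j =>
    ⟨0, forall_mem_image.2 fun r hr => (hS r hr).1 j⟩
  have hc0 : ∀ j, 0 ≤ c j := fun j =>
    le_csInf (hne.image _) (forall_mem_image.2 fun r hr => (hS r hr).1 j)
  refine ⟨hc0, fun k => ?_⟩
  have hlsc : LowerSemicontinuousWithinAt (fun u => ∑ j, llE (x k j) (update c k u j))
      (Ici (c k)) (c k) := by
    simp only [sum_llE_update]
    exact ((hx k k).1.lowerSemicontinuousWithinAt_llE ((hx k k).2.2.2 rfl) (hc0 k)).add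
      lowerSemicontinuousWithinAt_const
  have hle : ∀ r ∈ S, update c k (r k) ≤ r := fun r hr =>
    update_le_iff.2 ⟨le_rfl, fun j _ => csInf_le (hbdd j) (mem_image_of_mem _ hr)⟩
  have := hlsc.apply_csInf_le (hne.image _) (hbdd k) <| forall_mem_image.2 fun r hr =>
    (hx.sum_llE_le_of_le (hle r hr) (update_self ..)).trans ((hS r hr).2 k)
  rwa [update_eq_self] at this

theorem isSol_of_minimal (hx : FieldSetup m x) (hρy : ∀ k, 0 ≤ ρ k * y) {c : Fin m → ℝ}
    (hc : IsSubSol m x ρ y c) (hmin : ∀ r, IsSubSol m x ρ y r → r ≤ c → c ≤ r) :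
    IsSol m x ρ y c := by
  refine ⟨hc.1, fun k => (hc.2 k).antisymm ?_⟩
  by_contra! hlt
  set b := -(ρ k * y) - ∑ j ∈ Finset.univ.erase k, llE (x k j) (c j)
  have hsplit := sum_llE_update x c k (c k)
  rw [update_eq_self] at hsplit
  have hdiag : llE (x k k) (c k) < b := by linarith
  have hb : b ≤ 0 := by linarith [hx.sum_erase_llE_nonneg k c, hρy k]
  -- lower the `k`-th coordinate to the first time the diagonal term reaches the slack `b`
  obtain ⟨τ, hτ, hτb⟩ := (hx k k).1.exists_llE_eq (hx k k).2.1 ((hx k k).2.2.2 rfl) (hc.1 k) hb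
    (((hx k k).1.sInf_image_Icc_le_llE (hc.1 k)).trans hdiag.le)
  have hr := hx.isSubSol_update hc hτ.1 hτ.2 (by rw [hτb]; linarith)
  have hτk : c k ≤ τ := by simpa using hmin _ hr (update_le_self_iff.2 hτ.2) k
  rw [le_antisymm hτ.2 hτk] at hτb
  exact hdiag.ne hτb

theorem exists_isSol_le (hx : FieldSetup m x) (hρy : ∀ k, 0 ≤ ρ k * y) {s : Fin m → ℝ}
    (hs : IsSubSol m x ρ y s) : ∃ c, IsSol m x ρ y c ∧ c ≤ s := by
  set S := {r | IsSubSol m x ρ y r ∧ r ≤ s}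
  have hsS : s ∈ S := ⟨hs, le_rfl⟩
  set c := fun j => sInf ((fun r : Fin m → ℝ => r j) '' S)
  have hc_le : ∀ r ∈ S, c ≤ r := fun r hr j =>
    csInf_le ⟨0, forall_mem_image.2 fun r' hr' => hr'.1.1 j⟩ (mem_image_of_mem _ hr)
  have hc : IsSubSol m x ρ y c := hx.isSubSol_sInf ⟨s, hsS⟩ fun r hr => hr.1
  exact ⟨c, hx.isSol_of_minimal hρy hc fun r hr hrc => hc_le r ⟨hr, hrc.trans (hc_le s hsS)⟩,
    hc_le s hsS⟩

end FieldSetup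

end System

theorem stmt17_general (m : ℕ) (x : Fin m → Fin m → ℝ → ℝ) (hx : FieldSetup m x)
    (ρ : Fin m → ℝ) (hρ : ∀ i, 0 ≤ ρ i) (y : ℝ) (hy : 0 ≤ y)
    (T : Fin m → ℝ) (hT : IsMinSol m x ρ y T) :
    ∀ i : Fin m, ∀ t : ℝ, 0 ≤ t → t < T i →
      sInf (x i i '' Set.Icc 0 (T i)) < sInf (x i i '' Set.Icc 0 t) := by
  intro i t ht htT
  by_contra! hle
  have hρy : ∀ k, 0 ≤ ρ k * y := fun k => mul_nonneg (hρ k) hy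
  have hsplit := sum_llE_update x T i (T i)
  rw [update_eq_self] at hsplit
  have ha : llE (x i i) (T i) ≤ 0 := by
    linarith [hT.1.2 i, hx.sum_erase_llE_nonneg i T, hρy i]
  obtain ⟨τ, hτ, hτa⟩ := (hx i i).1.exists_llE_eq (hx i i).2.1 ((hx i i).2.2.2 rfl) ht ha
    (hle.trans ((hx i i).1.sInf_image_Icc_le_llE (ht.trans htT.le)))
  have hsub := hx.isSubSol_update hT.1.isSubSol hτ.1 (hτ.2.trans htT.le)
    (by rw [hτa, ← hsplit, hT.1.2 i])
  obtain ⟨c, hc, hcle⟩ := hx.exists_isSol_le hρy hsub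
  have := (hT.2 c hc i).trans (hcle i)
  rw [update_self] at this
  linarith [hτ.2]

/-- For each `i` and every `t < Tᵢ(y)`, the running infimum of `x_{i,i}` strictly
decreases: `inf_{r ≤ t} x_{i,i}(r) > inf_{r ≤ Tᵢ(y)} x_{i,i}(r)`. -/
theorem stmt17 (m : ℕ) (x : Fin m → Fin m → ℝ → ℝ) (hx : FieldSetup m x)
    (ρ : Fin m → ℝ) (hρ : ∀ i, 0 ≤ ρ i) (hρ0 : ρ ≠ 0) (y : ℝ) (hy : 0 ≤ y)
    (T : Fin m → ℝ) (hT : IsMinSol m x ρ y T) :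
    ∀ i : Fin m, ∀ t : ℝ, 0 ≤ t → t < T i →
      sInf (x i i '' Set.Icc 0 (T i)) < sInf (x i i '' Set.Icc 0 t) :=
  stmt17_general m x hx ρ hρ y hy T hT
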